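/- For binary vectors p, q ∈ {0,1}^m, the probability over a uniformly random permutation π of {1,...,m} that the MinHash values agree, i.e. min{π(i) : p_i = 1} = min{π(i) : q_i = 1}, equals (Σᵢ min{pᵢ,qᵢ}) / (Σᵢ max{pᵢ,qᵢ}) = 1 − d_J(p,q), where d_J is the Jaccard distance. -/
import Mathlib


open Finset

/-- MinHash of a boolean vector under a permutation: the minimum of `π i` over indices with `p i = true`. -/
def minHash {m : ℕ} (π : Equiv.Perm (Fin m)) (p : Fin m → Bool) : WithTop (Fin m) :=
  ((Finset.univ.filter fun i => p i = true).image π).min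

/-- Jaccard distance between boolean vectors. -/
noncomputable def jaccardDist {m : ℕ} (p q : Fin m → Bool) : ℝ :=
  1 - ((Finset.univ.filter fun i => p i = true ∧ q i = true).card : ℝ) /
      ((Finset.univ.filter fun i => p i = true ∨ q i = true).card : ℝ)

-- count of permutations for which j is the minimizer over U
def mcount {m : ℕ} (U : Finset (Fin m)) (j : Fin m) : ℕ :=
  (Finset.univ.filter fun π : Equiv.Perm (Fin m) => ∀ i ∈ U, π j ≤ π i).card

lemma mcount_const {m : ℕ} (U : Finset (Fin m)) {j j' : Fin m}
    (hj : j ∈ U) (hj' : j' ∈ U) : mcount U j = mcount U j' := by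
  unfold mcount
  apply Finset.card_bij (fun π _ => π * Equiv.swap j j')
  · intro π hπ
    simp only [mem_filter, mem_univ, true_and] at hπ ⊢
    intro i hi
    have hswap : Equiv.swap j j' i ∈ U := by
      rcases eq_or_ne i j with rfl | h1
      · simpa [Equiv.swap_apply_left] using hj'
      rcases eq_or_ne i j' with rfl | h2
      · simpa [Equiv.swap_apply_right] using hj
      · rwa [Equiv.swap_apply_of_ne_of_ne h1 h2]
    simpa [Equiv.Perm.mul_apply, Equiv.swap_apply_right] using hπ _ hswap
  · intro π hπ σ hσ h
    exact mul_right_cancel h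
  · intro π hπ
    refine ⟨π * Equiv.swap j j', ?_, by simp [mul_assoc]⟩
    simp only [mem_filter, mem_univ, true_and] at hπ ⊢
    intro i hi
    have hswap : Equiv.swap j j' i ∈ U := by
      rcases eq_or_ne i j with rfl | h1
      · simpa [Equiv.swap_apply_left] using hj'
      rcases eq_or_ne i j' with rfl | h2
      · simpa [Equiv.swap_apply_right] using hj
      · rwa [Equiv.swap_apply_of_ne_of_ne h1 h2]
    simpa [Equiv.Perm.mul_apply, Equiv.swap_apply_left] using hπ _ hswap

lemma sum_mcount {m : ℕ} (U I : Finset (Fin m)) (hIU : I ⊆ U) :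
    (Finset.univ.filter fun π : Equiv.Perm (Fin m) =>
      ∃ j ∈ I, ∀ i ∈ U, π j ≤ π i).card = ∑ j ∈ I, mcount U j := by
  have : (Finset.univ.filter fun π : Equiv.Perm (Fin m) =>
      ∃ j ∈ I, ∀ i ∈ U, π j ≤ π i)
      = I.biUnion (fun j => Finset.univ.filter fun π : Equiv.Perm (Fin m) => ∀ i ∈ U, π j ≤ π i) := by
    ext π
    simp only [mem_biUnion, mem_filter, mem_univ, true_and]
  rw [this]
  rw [show (∑ j ∈ I, mcount U j) = ∑ j ∈ I, (Finset.univ.filter fun π : Equiv.Perm (Fin m) => ∀ i ∈ U, π j ≤ π i).card from rfl]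
  refine Finset.card_biUnion ?_
  intro j hj j' hj' hne
  simp only [Finset.disjoint_left, mem_filter, mem_univ, true_and]
  rintro π h1 h2
  exact hne (π.injective (le_antisymm (h1 j' (hIU hj')) (h2 j (hIU hj))))

lemma collision_iff {m : ℕ} (π : Equiv.Perm (Fin m)) (p q : Fin m → Bool)
    (hA : (Finset.univ.filter fun i => p i = true).Nonempty)
    (hB : (Finset.univ.filter fun i => q i = true).Nonempty) :
    minHash π p = minHash π q ↔
      ∃ j ∈ (Finset.univ.filter fun i => p i = true ∧ q i = true),
        ∀ i ∈ (Finset.univ.filter fun i => p i = true ∨ q i = true), π j ≤ π i := by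
  set A := Finset.univ.filter fun i => p i = true with hAdef
  set B := Finset.univ.filter fun i => q i = true with hBdef
  have hAi : (A.image π).Nonempty := hA.image π
  have hBi : (B.image π).Nonempty := hB.image π
  have hmH : minHash π p = minHash π q ↔ (A.image π).min' hAi = (B.image π).min' hBi := by
    unfold minHash
    rw [← Finset.coe_min' hAi, ← Finset.coe_min' hBi]
    exact ⟨fun h => WithTop.coe_injective h, fun h => by rw [h]⟩
  rw [hmH]
  constructor
  · intro h
    obtain ⟨j, hjA, hja⟩ := Finset.mem_image.mp (Finset.min'_mem _ hAi)
    obtain ⟨j', hjB, hjb⟩ := Finset.mem_image.mp (Finset.min'_mem _ hBi)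
    have hjj : j = j' := π.injective (by rw [hja, hjb, h])
    subst hjj
    simp only [hAdef, mem_filter, mem_univ, true_and] at hjA
    simp only [hBdef, mem_filter, mem_univ, true_and] at hjB
    refine ⟨j, by simp [hjA, hjB], ?_⟩
    intro i hi
    simp only [mem_filter, mem_univ, true_and] at hi
    rcases hi with hi | hi
    · have : (A.image π).min' hAi ≤ π i :=
        Finset.min'_le _ _ (Finset.mem_image_of_mem π (by simp [hAdef, hi]))
      rw [← hja] at this; exact this
    · have : (B.image π).min' hBi ≤ π i :=
        Finset.min'_le _ _ (Finset.mem_image_of_mem π (by simp [hBdef, hi]))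
      rw [← h, ← hja] at this; exact this
  · rintro ⟨j, hj, hmin⟩
    simp only [mem_filter, mem_univ, true_and] at hj
    have hjA : j ∈ A := by simp [hAdef, hj.1]
    have hjB : j ∈ B := by simp [hBdef, hj.2]
    have key : ∀ (C : Finset (Fin m)) (hC : (C.image π).Nonempty), j ∈ C →
        (∀ i ∈ C, i ∈ Finset.univ.filter fun i => p i = true ∨ q i = true) →
        (C.image π).min' hC = π j := by
      intro C hC hjC hsub
      apply le_antisymm
      · exact Finset.min'_le _ _ (Finset.mem_image_of_mem π hjC)
      · obtain ⟨i, hiC, hieq⟩ := Finset.mem_image.mp (Finset.min'_mem _ hC)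
        rw [← hieq]
        exact hmin i (hsub i hiC)
    rw [key A hAi hjA (fun i hi => by simp only [hAdef, mem_filter, mem_univ, true_and] at hi ⊢; exact Or.inl hi),
        key B hBi hjB (fun i hi => by simp only [hBdef, mem_filter, mem_univ, true_and] at hi ⊢; exact Or.inr hi)]


/-- MinHash is an LSH for the Jaccard distance: over a uniformly random permutation,
the collision probability equals the Jaccard similarity. -/
theorem stmt0 (m : ℕ) (p q : Fin m → Bool)
    (hp : ∃ i, p i = true) (hq : ∃ i, q i = true) :
    ((Finset.univ.filter fun π : Equiv.Perm (Fin m) => minHash π p = minHash π q).card : ℝ) /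
        (Nat.factorial m : ℝ)
      = ((Finset.univ.filter fun i => p i = true ∧ q i = true).card : ℝ) /
        ((Finset.univ.filter fun i => p i = true ∨ q i = true).card : ℝ) ∧
    ((Finset.univ.filter fun π : Equiv.Perm (Fin m) => minHash π p = minHash π q).card : ℝ) /
        (Nat.factorial m : ℝ) = 1 - jaccardDist p q := by
  obtain ⟨i₀, hi₀⟩ := hp
  obtain ⟨i₁, hi₁⟩ := hq
  have hA : (Finset.univ.filter fun i => p i = true).Nonempty := ⟨i₀, by simp [hi₀]⟩
  have hB : (Finset.univ.filter fun i => q i = true).Nonempty := ⟨i₁, by simp [hi₁]⟩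
  set I := Finset.univ.filter fun i : Fin m => p i = true ∧ q i = true with hIdef
  set U := Finset.univ.filter fun i : Fin m => p i = true ∨ q i = true with hUdef
  have hIU : I ⊆ U := by
    intro i hi
    simp only [hIdef, hUdef, mem_filter, mem_univ, true_and] at hi ⊢
    exact Or.inl hi.1
  have hUne : U.Nonempty := ⟨i₀, by simp [hUdef, hi₀]⟩
  obtain ⟨j₀, hj₀⟩ := hUne
  -- collision count
  have hcol : (Finset.univ.filter fun π : Equiv.Perm (Fin m) =>
      minHash π p = minHash π q) = (Finset.univ.filter fun π : Equiv.Perm (Fin m) =>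
      ∃ j ∈ I, ∀ i ∈ U, π j ≤ π i) := by
    apply Finset.filter_congr
    intro π _
    exact collision_iff π p q hA hB
  have hN : (Finset.univ.filter fun π : Equiv.Perm (Fin m) =>
      minHash π p = minHash π q).card = I.card * mcount U j₀ := by
    rw [hcol, sum_mcount U I hIU]
    rw [Finset.sum_congr rfl (fun j hj => mcount_const U (hIU hj) hj₀)]
    simp [mul_comm]
  have hfact : Nat.factorial m = U.card * mcount U j₀ := by
    have huniv : (Finset.univ : Finset (Equiv.Perm (Fin m))) =
        Finset.univ.filter fun π : Equiv.Perm (Fin m) => ∃ j ∈ U, ∀ i ∈ U, π j ≤ π i := by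
      ext π
      simp only [mem_filter, mem_univ, true_and, iff_true_intro trivial, true_iff]
      obtain ⟨j, hjU, hje⟩ := Finset.mem_image.mp
        (Finset.min'_mem _ ((Finset.Nonempty.image ⟨j₀, hj₀⟩ π : (U.image π).Nonempty)))
      refine ⟨j, hjU, fun i hi => ?_⟩
      rw [hje]
      exact Finset.min'_le _ _ (Finset.mem_image_of_mem π hi)
    have h1 : (Finset.univ : Finset (Equiv.Perm (Fin m))).card = ∑ j ∈ U, mcount U j := by
      conv_lhs => rw [huniv]
      exact sum_mcount U U (Finset.Subset.refl U)
    have h2 : (Finset.univ : Finset (Equiv.Perm (Fin m))).card = Nat.factorial m := by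
      rw [Finset.card_univ, Fintype.card_perm, Fintype.card_fin]
    rw [← h2, h1, Finset.sum_congr rfl (fun j hj => mcount_const U hj hj₀)]
    simp [mul_comm]
  -- arithmetic
  have hfactpos : (0:ℝ) < (Nat.factorial m : ℝ) := by positivity
  have hcne : mcount U j₀ ≠ 0 := by
    intro h
    rw [h, mul_zero] at hfact
    exact (Nat.factorial_ne_zero m) hfact
  have hUcne : U.card ≠ 0 := by
    intro h
    rw [h, zero_mul] at hfact
    exact (Nat.factorial_ne_zero m) hfact
  have main : ((Finset.univ.filter fun π : Equiv.Perm (Fin m) =>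
      minHash π p = minHash π q).card : ℝ) / (Nat.factorial m : ℝ)
      = (I.card : ℝ) / (U.card : ℝ) := by
    rw [hN, hfact]
    push_cast
    rw [mul_div_mul_right _ _ (by exact_mod_cast hcne : (mcount U j₀ : ℝ) ≠ 0)]
  refine ⟨main, ?_⟩
  rw [main]
  unfold jaccardDist
  ring
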